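/- arXiv:2504.12945 — 7 statements merged into one kernel-verified Lean document; each statement's English description precedes it below -/
import Mathlib

section
/- For any positive integer k, with p = ⌊(k-1)/2⌋ and the convention C(k,-1) = 0, the sum ∑_{j=0}^{p} (k-2j)·(C(k,j+1) - C(k,j-1)) equals 2^{k+1} - k - 2. -/
/-!
The summand `f j = (k - 2j)(C(k, j+1) - C(k, j-1))` is invariant under `j ↦ k - j` and vanishes at
`j = k/2`, so the sum over `j ≤ ⌊(k-1)/2⌋` is half the sum over all `0 ≤ j ≤ k`. Over the full
range, shifting the index in each of the two binomial sums leaves the weights `k - 2i ± 2`, whose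
difference is `4`, plus the boundary terms `k + 2` twice; hence the full sum is
`4 · 2^k - 2(k + 2)`.
-/

open Finset

theorem Finset.sum_range_succ_eq_two_nsmul_of_symm {M : Type*} [AddCommMonoid M] (f : ℕ → M)
    (n : ℕ) (hsymm : ∀ j ≤ n, f (n - j) = f j) (hmid : ∀ j, n = 2 * j → f j = 0) :
    ∑ j ∈ range (n + 1), f j = 2 • ∑ j ∈ range ((n + 1) / 2), f j := by
  have reflect : ∀ m ≤ n + 1, ∑ i ∈ range m, f (n + 1 - m + i) = ∑ j ∈ range m, f j := by
    intro m hm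
    rw [← sum_range_reflect f m]
    refine sum_congr rfl fun i hi => ?_
    have hi := mem_range.mp hi
    rw [← hsymm (m - 1 - i) (by omega)]
    congr 1
    omega
  rw [two_nsmul]
  obtain ⟨q, rfl | rfl⟩ := Nat.even_or_odd' n
  · have right_half := reflect q (by omega)
    rw [show 2 * q + 1 = q + (q + 1) by ring, sum_range_add, sum_range_succ', Nat.add_zero q,
      hmid q rfl, add_zero, show (q + (q + 1)) / 2 = q by omega, ← right_half]
    refine congrArg _ (sum_congr rfl fun i _ => congrArg f (by omega))
  · have right_half := reflect (q + 1) (by omega)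
    rw [show 2 * q + 1 + 1 = (q + 1) + (q + 1) by ring, sum_range_add,
      show (q + 1 + (q + 1)) / 2 = q + 1 by omega, ← right_half]
    refine congrArg _ (sum_congr rfl fun i _ => congrArg f (by omega))

def pgmTraceTerm (k j : ℕ) : ℤ :=
  ((k : ℤ) - 2 * (j : ℤ)) * ((k.choose (j + 1) : ℤ) - (if j = 0 then 0 else (k.choose (j - 1) : ℤ)))

theorem Nat.choose_sub_add_one {n j : ℕ} (hj : j ≤ n) :
    n.choose (n - j + 1) = if j = 0 then 0 else n.choose (j - 1) := by
  rcases j with _ | i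
  · simp
  · rw [if_neg i.succ_ne_zero, show n - (i + 1) + 1 = n - i by omega, Nat.choose_symm (by omega),
      Nat.add_sub_cancel]

theorem pgmTraceTerm_symm {k j : ℕ} (hj : j ≤ k) : pgmTraceTerm k (k - j) = pgmTraceTerm k j := by
  have h₁ := Nat.choose_sub_add_one hj
  have h₂ := Nat.choose_sub_add_one (Nat.sub_le k j)
  rw [Nat.sub_sub_self hj] at h₂
  unfold pgmTraceTerm
  rw [h₁, h₂]
  push_cast [hj]
  split_ifs <;> ring

theorem pgmTraceTerm_half (k : ℕ) : pgmTraceTerm (2 * k) k = 0 := by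
  rw [pgmTraceTerm]
  push_cast
  ring

theorem sum_pgmTraceTerm (k : ℕ) :
    ∑ j ∈ range (k + 1), pgmTraceTerm k j = 2 ^ (k + 2) - 2 * k - 4 := by
  set a : ℕ → ℤ := fun i => k.choose i with ha
  have upper : ∑ j ∈ range (k + 1), ((k : ℤ) - 2 * j) * a (j + 1)
      = ∑ i ∈ range (k + 1), ((k : ℤ) - 2 * i + 2) * a i - (k + 2) := by
    rw [sum_range_succ, sum_range_succ' _ k]
    simp only [ha, Nat.choose_succ_self, Nat.choose_zero_right]
    push_cast
    ring_nf
  have lower : ∑ j ∈ range (k + 1), ((k : ℤ) - 2 * j) * (if j = 0 then 0 else a (j - 1))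
      = ∑ i ∈ range (k + 1), ((k : ℤ) - 2 * i - 2) * a i + (k + 2) := by
    rw [sum_range_succ' _ k, sum_range_succ]
    simp only [ha, Nat.choose_self, Nat.add_sub_cancel, Nat.succ_ne_zero, if_false]
    push_cast
    ring_nf
  have total : ∑ i ∈ range (k + 1), a i = 2 ^ k := by
    simpa [a] using congrArg (Nat.cast : ℕ → ℤ) (Nat.sum_range_choose k)
  have telescoped : ∑ i ∈ range (k + 1), ((k : ℤ) - 2 * i + 2) * a i
      - ∑ i ∈ range (k + 1), ((k : ℤ) - 2 * i - 2) * a i = 4 * ∑ i ∈ range (k + 1), a i := by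
    rw [← sum_sub_distrib, mul_sum]
    exact sum_congr rfl fun i _ => by ring
  simp only [pgmTraceTerm, mul_sub, sum_sub_distrib]
  rw [upper, lower]
  linear_combination telescoped + 4 * total

theorem pgm_trace_sum (k : ℕ) (hk : 1 ≤ k) :
    ∑ j ∈ Finset.range ((k - 1) / 2 + 1),
        ((k : ℤ) - 2 * (j : ℤ)) *
          ((k.choose (j + 1) : ℤ) - (if j = 0 then 0 else (k.choose (j - 1) : ℤ)))
      = 2 ^ (k + 1) - (k : ℤ) - 2 := by
  change ∑ j ∈ range ((k - 1) / 2 + 1), pgmTraceTerm k j = _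
  have halves := sum_range_succ_eq_two_nsmul_of_symm (pgmTraceTerm k) k
    (fun _ => pgmTraceTerm_symm) (by rintro j rfl; exact pgmTraceTerm_half j)
  rw [sum_pgmTraceTerm, two_nsmul, show (k + 1) / 2 = (k - 1) / 2 + 1 by omega, pow_succ] at halves
  linarith
end

section
/- Let d ≥ 2 and 1/d² ≤ f ≤ 1. Define the d×d real matrix M with diagonal entries M_{11} = b - c and M_{ii} = a + b - c for i ≥ 2, and all off-diagonal entries equal to b, where a = 1/d³, b = f(1-df)/(d²(1-d²f)), c = (1-df)/(d³(1-d²f)). If f > 1/d² (so the quantities are well-defined), then M is positive semidefinite. -/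
/-!
Scaled by `d³ (d² f - 1) > 0`, the matrix is `diag(1 - u, u (d - 1), …, u (d - 1)) + u (u - 1) J`
with `u = d f`. Writing `x₀` for the first coordinate, `R` and `P` for the sum and the sum of
squares of the others, its quadratic form is `((u - 1) x₀ + u R)² + u ((d - 1) P - R²)`, and the
second term is nonnegative by Cauchy–Schwarz.
-/

open Finset

namespace Matrix

variable {ι : Type*} [Fintype ι]

theorem mulVec_of_const {R : Type*} [NonUnitalNonAssocSemiring R] (b : R) (x : ι → R) :
    (of fun _ _ => b : Matrix ι ι R) *ᵥ x = fun _ => b * ∑ i, x i := by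
  ext
  simp [mulVec, dotProduct, mul_sum]

theorem dotProduct_mulVec_diagonal_add_of_const {R : Type*} [CommRing R] [DecidableEq ι]
    (w : ι → R) (b : R) (x : ι → R) :
    x ⬝ᵥ (diagonal w + of fun _ _ => b) *ᵥ x = ∑ i, w i * x i ^ 2 + b * (∑ i, x i) ^ 2 := by
  rw [add_mulVec, dotProduct_add, mulVec_of_const]
  simp only [dotProduct, mulVec_diagonal]
  rw [← sum_mul]
  congr 1
  · exact sum_congr rfl fun i _ => by ring
  · ring

theorem posSemidef_diagonal_update_add_of_const [DecidableEq ι] (i₀ : ι) {u : ℝ} (hu : 0 ≤ u) :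
    (diagonal (Function.update (fun _ => u * (Fintype.card ι - 1)) i₀ (1 - u)) +
      of fun _ _ => u * (u - 1)).PosSemidef := by
  refine .of_dotProduct_mulVec_nonneg ((isHermitian_diagonal _).add (by ext; rfl)) fun x => ?_
  rw [star_trivial, dotProduct_mulVec_diagonal_add_of_const, ← add_sum_erase _ _ (mem_univ i₀),
    ← add_sum_erase _ _ (mem_univ i₀), Function.update_self]
  set R := ∑ i ∈ univ.erase i₀, x i
  have hP : ∑ i ∈ univ.erase i₀,
      Function.update (fun _ => u * (Fintype.card ι - 1)) i₀ (1 - u) i * x i ^ 2 =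
        u * (Fintype.card ι - 1) * ∑ i ∈ univ.erase i₀, x i ^ 2 := by
    rw [mul_sum]
    exact sum_congr rfl fun i hi => by rw [Function.update_of_ne (ne_of_mem_erase hi)]
  have hCS : R ^ 2 ≤ (Fintype.card ι - 1) * ∑ i ∈ univ.erase i₀, x i ^ 2 := by
    have := sq_sum_le_card_mul_sum_sq (s := univ.erase i₀) (f := x)
    rwa [card_erase_of_mem (mem_univ _), card_univ, Nat.cast_sub (Fintype.card_pos_iff.2 ⟨i₀⟩),
      Nat.cast_one] at this
  rw [hP]
  nlinarith [sq_nonneg ((u - 1) * x i₀ + u * R), mul_le_mul_of_nonneg_left hCS hu]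

end Matrix

open Matrix

theorem dual_feasibility_M_posSemidef_general (d : ℕ) (f : ℝ)
    (hf1 : 1 / (d : ℝ) ^ 2 < f) :
    let a : ℝ := 1 / (d : ℝ) ^ 3
    let b : ℝ := f * (1 - (d : ℝ) * f) / ((d : ℝ) ^ 2 * (1 - (d : ℝ) ^ 2 * f))
    let c : ℝ := (1 - (d : ℝ) * f) / ((d : ℝ) ^ 3 * (1 - (d : ℝ) ^ 2 * f))
    Matrix.PosSemidef (Matrix.of fun i j : Fin d =>
      if i = j then (if (i : ℕ) = 0 then b - c else a + b - c) else b) := by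
  intro a b c
  rcases Nat.eq_zero_or_pos d with rfl | hd
  · exact .of_dotProduct_mulVec_nonneg (by ext i; exact i.elim0) fun x => by simp
  have hd0 : (0 : ℝ) < d := by exact_mod_cast hd
  have he : 0 < (d : ℝ) ^ 2 * f - 1 := by
    rw [div_lt_iff₀ (by positivity)] at hf1
    linarith
  have hf0 : 0 ≤ f := by nlinarith
  have h1 : 1 - (d : ℝ) ^ 2 * f = -((d : ℝ) ^ 2 * f - 1) := by ring
  have hM : (of fun i j : Fin d => if i = j then (if (i : ℕ) = 0 then b - c else a + b - c) else b) =
      ((d : ℝ) ^ 3 * ((d : ℝ) ^ 2 * f - 1))⁻¹ •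
        (diagonal (Function.update (fun _ => d * f * (Fintype.card (Fin d) - 1)) ⟨0, hd⟩
          (1 - d * f)) + of fun _ _ => d * f * (d * f - 1)) := by
    ext i j
    rcases eq_or_ne i j with rfl | hij
    · rcases eq_or_ne i ⟨0, hd⟩ with rfl | hi
      · simp [a, b, c]
        rw [h1]; field_simp; ring
      · have hi' : (i : ℕ) ≠ 0 := fun h => hi (Fin.ext h)
        simp [a, b, c, hi, hi']
        rw [h1]; field_simp; ring
    · simp [b, hij]
      rw [h1]; field_simp; ring
  rw [hM]
  exact (posSemidef_diagonal_update_add_of_const _ (by positivity)).smul (by positivity)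

theorem dual_feasibility_M_posSemidef (d : ℕ) (hd : 2 ≤ d) (f : ℝ)
    (hf1 : 1 / (d : ℝ) ^ 2 < f) (hf2 : f ≤ 1) :
    let a : ℝ := 1 / (d : ℝ) ^ 3
    let b : ℝ := f * (1 - (d : ℝ) * f) / ((d : ℝ) ^ 2 * (1 - (d : ℝ) ^ 2 * f))
    let c : ℝ := (1 - (d : ℝ) * f) / ((d : ℝ) ^ 3 * (1 - (d : ℝ) ^ 2 * f))
    Matrix.PosSemidef (Matrix.of fun i j : Fin d =>
      if i = j then (if (i : ℕ) = 0 then b - c else a + b - c) else b) :=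
  dual_feasibility_M_posSemidef_general d f hf1
end

section
/- Let d ≥ 2 and 1/d ≤ f ≤ 1 with f > 1/d². Define the d×d symmetric matrix N whose diagonal entries all equal x + y - z and whose off-diagonal entries all equal y, where x = 1/d³ - (1-f)/(d²(d²-1)), y = f(1-df)/(d²(1-d²f)) - (d²f-1)/(d³(d²-1)), and z = (1-df)/(d³(1-d²f)). Then the eigenvalues of N are 0 (with multiplicity 1) and λ₂ = (d²f² + (d³-2d²-d)f + 1)/(d²(d²-1)(d²f-1)) (with multiplicity d-1), and N is positive semidefinite. -/
/-!
`N` has the form `(c - b) • 1 + b • J` with diagonal `c = x + y - z` and off-diagonal `b = y`,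
so it acts as `c - b` on the sum-zero hyperplane and as `c - b + d b` on the constant vectors.
Clearing denominators gives `x - z + d y = 0` and `x - z = λ₂`, and the numerator of `λ₂` equals
`(d f - 1)² + (d - 1)² d f`, which is nonnegative as soon as `f > 0`.
-/

open Finset Matrix

section UniformDiagonal

variable {n : Type*} [Fintype n] [DecidableEq n]

theorem Matrix.mulVec_of_ite_eq {R : Type*} [CommRing R] (c b : R) (v : n → R) (i : n) :
    ((Matrix.of fun i j => if i = j then c else b) *ᵥ v) i = (c - b) * v i + b * ∑ j, v j := by
  have hentry : ∀ j,
      (if i = j then c else b) * v j = (if i = j then (c - b) * v j else 0) + b * v j := by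
    intro j
    split_ifs <;> ring
  simp only [mulVec, dotProduct, of_apply, hentry, sum_add_distrib, sum_ite_eq, mem_univ,
    if_true, mul_sum]

theorem Matrix.posSemidef_of_ite_eq (c b : ℝ) (hdiff : 0 ≤ c - b)
    (hconst : 0 ≤ c - b + Fintype.card n * b) :
    (Matrix.of fun i j : n => if i = j then c else b).PosSemidef := by
  refine posSemidef_iff_dotProduct_mulVec.mpr ⟨?_, fun v => ?_⟩
  · ext i j
    simp only [conjTranspose_apply, of_apply, star_trivial, eq_comm]
  have hquad : star v ⬝ᵥ ((Matrix.of fun i j => if i = j then c else b) *ᵥ v)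
      = (c - b) * ∑ i, v i ^ 2 + b * (∑ i, v i) ^ 2 := by
    set S := ∑ i, v i
    simp only [dotProduct, star_trivial, mulVec_of_ite_eq]
    calc ∑ i, v i * ((c - b) * v i + b * S) = ∑ i, ((c - b) * v i ^ 2 + b * S * v i) :=
          sum_congr rfl fun i _ => by ring
      _ = _ := by rw [sum_add_distrib, ← mul_sum, ← mul_sum]; ring
  have hcs : (∑ i, v i) ^ 2 ≤ Fintype.card n * ∑ i, v i ^ 2 := by
    simpa using sq_sum_le_card_mul_sum_sq (s := univ) (f := v)
  rw [hquad]
  rcases le_or_gt 0 b with hb | hb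
  · positivity
  · nlinarith [sum_nonneg fun i (_ : i ∈ univ) => sq_nonneg (v i)]

end UniformDiagonal

theorem dual_feasibility_N_eigenvalues_general (d : ℕ) (hd : 2 ≤ d) (f : ℝ)
    (hf2 : 1 / (d : ℝ) ^ 2 < f) :
    let x : ℝ := 1 / (d : ℝ) ^ 3 - (1 - f) / ((d : ℝ) ^ 2 * ((d : ℝ) ^ 2 - 1))
    let y : ℝ := f * (1 - (d : ℝ) * f) / ((d : ℝ) ^ 2 * (1 - (d : ℝ) ^ 2 * f))
      - ((d : ℝ) ^ 2 * f - 1) / ((d : ℝ) ^ 3 * ((d : ℝ) ^ 2 - 1))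
    let z : ℝ := (1 - (d : ℝ) * f) / ((d : ℝ) ^ 3 * (1 - (d : ℝ) ^ 2 * f))
    let N : Matrix (Fin d) (Fin d) ℝ := Matrix.of fun i j => if i = j then x + y - z else y
    let lam2 : ℝ := ((d : ℝ) ^ 2 * f ^ 2 + ((d : ℝ) ^ 3 - 2 * (d : ℝ) ^ 2 - (d : ℝ)) * f + 1)
      / ((d : ℝ) ^ 2 * ((d : ℝ) ^ 2 - 1) * ((d : ℝ) ^ 2 * f - 1))
    N.mulVec (fun _ => 1) = 0 ∧
    (∀ v : Fin d → ℝ, ∑ i, v i = 0 → N.mulVec v = lam2 • v) ∧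
    N.PosSemidef := by
  intro x y z N lam2
  have hd2 : (2 : ℝ) ≤ d := by exact_mod_cast hd
  have hd1 : 0 < (d : ℝ) ^ 2 - 1 := by nlinarith
  have hdf : 0 < (d : ℝ) ^ 2 * f - 1 := by
    rw [div_lt_iff₀ (by positivity)] at hf2
    linarith
  have hf : 0 < f := lt_trans (by positivity) hf2
  have hfd : 1 - (d : ℝ) ^ 2 * f ≠ 0 := by linarith
  have hconst : x + y - z - y + d * y = 0 := by
    simp only [x, y, z]
    field_simp [hd1.ne', hdf.ne']
    ring
  have heigen : x + y - z - y = lam2 := by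
    simp only [x, z, lam2]
    field_simp [hd1.ne', hdf.ne']
    ring
  have hlam2 : 0 ≤ lam2 := by
    have hnum : (d : ℝ) ^ 2 * f ^ 2 + ((d : ℝ) ^ 3 - 2 * (d : ℝ) ^ 2 - (d : ℝ)) * f + 1
        = ((d : ℝ) * f - 1) ^ 2 + ((d : ℝ) - 1) ^ 2 * (d * f) := by ring
    simp only [lam2, hnum]
    positivity
  refine ⟨?_, fun v hv => ?_, ?_⟩
  · ext i
    simp only [N, mulVec_of_ite_eq, Pi.zero_apply, sum_const, card_univ, Fintype.card_fin,
      nsmul_eq_mul, mul_one]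
    linear_combination hconst
  · ext i
    simp [N, mulVec_of_ite_eq, hv, heigen]
  · exact posSemidef_of_ite_eq _ _ (heigen ▸ hlam2) (by simp [hconst])

theorem dual_feasibility_N_eigenvalues (d : ℕ) (hd : 2 ≤ d) (f : ℝ)
    (hf0 : 1 / (d : ℝ) ≤ f) (hf1 : f ≤ 1) (hf2 : 1 / (d : ℝ) ^ 2 < f) :
    let x : ℝ := 1 / (d : ℝ) ^ 3 - (1 - f) / ((d : ℝ) ^ 2 * ((d : ℝ) ^ 2 - 1))
    let y : ℝ := f * (1 - (d : ℝ) * f) / ((d : ℝ) ^ 2 * (1 - (d : ℝ) ^ 2 * f))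
      - ((d : ℝ) ^ 2 * f - 1) / ((d : ℝ) ^ 3 * ((d : ℝ) ^ 2 - 1))
    let z : ℝ := (1 - (d : ℝ) * f) / ((d : ℝ) ^ 3 * (1 - (d : ℝ) ^ 2 * f))
    let N : Matrix (Fin d) (Fin d) ℝ := Matrix.of fun i j => if i = j then x + y - z else y
    let lam2 : ℝ := ((d : ℝ) ^ 2 * f ^ 2 + ((d : ℝ) ^ 3 - 2 * (d : ℝ) ^ 2 - (d : ℝ)) * f + 1)
      / ((d : ℝ) ^ 2 * ((d : ℝ) ^ 2 - 1) * ((d : ℝ) ^ 2 * f - 1))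
    N.mulVec (fun _ => 1) = 0 ∧
    (∀ v : Fin d → ℝ, ∑ i, v i = 0 → N.mulVec v = lam2 • v) ∧
    N.PosSemidef :=
  dual_feasibility_N_eigenvalues_general d hd f hf2
end

section
/- Let d ≥ 2 and 1/d < f ≤ 1. The maximum of μ₁ subject to the constraints μ₁ ≥ ν ≥ 0, f = (1/d)(√μ₁ + (d-1)√ν)², and μ₁ + (d-1)ν ≤ 1, is attained when μ₁ + (d-1)ν = 1, and equals μ₁ = 1 - f + (-1 + 2(f + √((d-1)(1-f)f)))/d. -/
/-!
With `x = √μ₁`, `y = √ν` and `n = d - 1`, the constraints say that `(x, y)` lies on the line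
`x + n y = √(d f)` and inside the ellipse `x² + n y² ≤ 1`. Completing the square bounds `x` by the
larger `x`-coordinate of the two points where the line meets the ellipse. That point itself has
`0 ≤ y ≤ x` precisely because `d f ≥ 1`, so the bound is attained, with `μ₁ + (d - 1) ν = 1`.
-/

/-- The intersection of the line `x + n y = t` with the ellipse `x² + n y² = 1` having the larger
`x`-coordinate is `(lineEllipseX n t, lineEllipseY n t)`. -/
noncomputable def lineEllipseX (n t : ℝ) : ℝ := (t + √(n * (n + 1 - t ^ 2))) / (n + 1)

noncomputable def lineEllipseY (n t : ℝ) : ℝ := (n * t - √(n * (n + 1 - t ^ 2))) / (n * (n + 1))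

section LineEllipse

variable {n t : ℝ}

/-- Eliminating `y`, `(n + 1) x² - 2 t x + t² - n ≤ 0`; completing the square gives
`((n + 1) x - t)² ≤ n (n + 1 - t²)`. -/
theorem le_lineEllipseX (hn : 0 ≤ n) {x y : ℝ} (hline : x + n * y = t)
    (hellipse : x ^ 2 + n * y ^ 2 ≤ 1) : x ≤ lineEllipseX n t := by
  have hsq : ((n + 1) * x - t) ^ 2 ≤ n * (n + 1 - t ^ 2) := by
    subst hline
    nlinarith [mul_le_mul_of_nonneg_left hellipse hn]
  rw [lineEllipseX, le_div_iff₀ (by linarith)]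
  linarith [le_abs_self ((n + 1) * x - t), Real.abs_le_sqrt hsq]

theorem lineEllipseX_add_mul_lineEllipseY (hn : 0 < n) :
    lineEllipseX n t + n * lineEllipseY n t = t := by
  rw [lineEllipseX, lineEllipseY]
  field_simp
  ring

theorem lineEllipseX_sq_add_mul_lineEllipseY_sq (hn : 0 < n) (ht : t ^ 2 ≤ n + 1) :
    lineEllipseX n t ^ 2 + n * lineEllipseY n t ^ 2 = 1 := by
  have hR : √(n * (n + 1 - t ^ 2)) ^ 2 = n * (n + 1 - t ^ 2) :=
    Real.sq_sqrt (mul_nonneg hn.le (by linarith))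
  rw [lineEllipseX, lineEllipseY]
  field_simp
  linear_combination (n + 1) * hR

/-- `n t ≥ √(n (n + 1 - t²))` is equivalent to `t² ≥ 1`. -/
theorem lineEllipseY_nonneg (hn : 0 < n) (ht₀ : 0 ≤ t) (ht₁ : 1 ≤ t ^ 2) :
    0 ≤ lineEllipseY n t := by
  have hR : √(n * (n + 1 - t ^ 2)) ≤ n * t := by
    rw [Real.sqrt_le_left (by positivity)]
    nlinarith [mul_nonneg (mul_pos hn (by linarith : (0 : ℝ) < n + 1)).le (sub_nonneg.2 ht₁)]
  exact div_nonneg (by linarith) (by positivity)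

theorem lineEllipseY_le_lineEllipseX (hn : 0 < n) : lineEllipseY n t ≤ lineEllipseX n t := by
  have hdiff : lineEllipseX n t - lineEllipseY n t = √(n * (n + 1 - t ^ 2)) / n := by
    rw [lineEllipseX, lineEllipseY]
    field_simp
    ring
  linarith [div_nonneg (Real.sqrt_nonneg (n * (n + 1 - t ^ 2))) hn.le]

end LineEllipse

theorem le_lineEllipseX_sq {n μ ν : ℝ} (hn : 0 ≤ n) (hμ : 0 ≤ μ) (hν : 0 ≤ ν)
    (h : μ + n * ν ≤ 1) : μ ≤ lineEllipseX n (√μ + n * √ν) ^ 2 := by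
  have hx := le_lineEllipseX (x := √μ) (y := √ν) hn rfl
    (by rwa [Real.sq_sqrt hμ, Real.sq_sqrt hν])
  calc μ = √μ ^ 2 := (Real.sq_sqrt hμ).symm
    _ ≤ _ := pow_le_pow_left₀ (Real.sqrt_nonneg μ) hx 2

theorem lineEllipseX_sq_eq {D f : ℝ} (hD : 1 ≤ D) (hf₀ : 0 ≤ f) (hf₁ : f ≤ 1) :
    lineEllipseX (D - 1) √(D * f) ^ 2 =
      1 - f + (-1 + 2 * (f + √((D - 1) * (1 - f) * f))) / D := by
  have hf : √(D * f) ^ 2 = D * f := Real.sq_sqrt (by positivity)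
  have hR : √((D - 1) * (D - D * f)) ^ 2 = (D - 1) * (D - D * f) :=
    Real.sq_sqrt (mul_nonneg (by linarith) (by nlinarith))
  have hcross : √(D * f) * √((D - 1) * (D - D * f)) = D * √((D - 1) * (1 - f) * f) := by
    rw [← Real.sqrt_mul (by positivity),
      show D * f * ((D - 1) * (D - D * f)) = D ^ 2 * ((D - 1) * (1 - f) * f) by ring,
      Real.sqrt_mul (by positivity), Real.sqrt_sq (by linarith)]
  rw [lineEllipseX, hf, sub_add_cancel, div_pow, add_sq, hf, hR, mul_assoc 2, hcross]
  field_simp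
  ring

theorem kyfan_convex_roof_optimization (d : ℕ) (hd : 2 ≤ d) (f : ℝ)
    (hf1 : 1 / (d : ℝ) < f) (hf2 : f ≤ 1) :
    IsGreatest {μ1 : ℝ | ∃ ν : ℝ, 0 ≤ ν ∧ ν ≤ μ1 ∧
        f = (1 / (d : ℝ)) * (Real.sqrt μ1 + ((d : ℝ) - 1) * Real.sqrt ν) ^ 2 ∧
        μ1 + ((d : ℝ) - 1) * ν ≤ 1}
      (1 - f + (-1 + 2 * (f + Real.sqrt (((d : ℝ) - 1) * (1 - f) * f))) / (d : ℝ)) ∧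
    (∃ ν : ℝ, 0 ≤ ν ∧
      ν ≤ (1 - f + (-1 + 2 * (f + Real.sqrt (((d : ℝ) - 1) * (1 - f) * f))) / (d : ℝ)) ∧
      f = (1 / (d : ℝ)) *
        (Real.sqrt (1 - f + (-1 + 2 * (f + Real.sqrt (((d : ℝ) - 1) * (1 - f) * f))) / (d : ℝ))
          + ((d : ℝ) - 1) * Real.sqrt ν) ^ 2 ∧
      (1 - f + (-1 + 2 * (f + Real.sqrt (((d : ℝ) - 1) * (1 - f) * f))) / (d : ℝ))
        + ((d : ℝ) - 1) * ν = 1) := by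
  have hD : (2 : ℝ) ≤ d := by exact_mod_cast hd
  have hn : (0 : ℝ) < d - 1 := by linarith
  have hf0 : 0 ≤ f := (one_div_pos.2 (by linarith)).le.trans hf1.le
  have ht : √(d * f) ^ 2 = d * f := Real.sq_sqrt (by positivity)
  have ht₁ : 1 ≤ √(d * f) ^ 2 := by
    rw [ht]
    exact ((div_lt_iff₀' (by linarith)).1 hf1).le
  set X := lineEllipseX (d - 1) √(d * f)
  set Y := lineEllipseY (d - 1) √(d * f)
  have hX : 0 ≤ X := (lineEllipseY_nonneg hn (Real.sqrt_nonneg _) ht₁).trans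
    (lineEllipseY_le_lineEllipseX hn)
  have hY : 0 ≤ Y := lineEllipseY_nonneg hn (Real.sqrt_nonneg _) ht₁
  rw [← lineEllipseX_sq_eq (by linarith) hf0 hf2]
  have hwitness : 0 ≤ Y ^ 2 ∧ Y ^ 2 ≤ X ^ 2 ∧
      f = 1 / (d : ℝ) * (√(X ^ 2) + (d - 1) * √(Y ^ 2)) ^ 2 ∧ X ^ 2 + (d - 1) * Y ^ 2 = 1 := by
    refine ⟨sq_nonneg Y, pow_le_pow_left₀ hY (lineEllipseY_le_lineEllipseX hn) 2, ?_,
      lineEllipseX_sq_add_mul_lineEllipseY_sq hn (by rw [ht, sub_add_cancel]; nlinarith)⟩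
    rw [Real.sqrt_sq hX, Real.sqrt_sq hY, lineEllipseX_add_mul_lineEllipseY hn, ht]
    field_simp
  refine ⟨⟨⟨Y ^ 2, hwitness.1, hwitness.2.1, hwitness.2.2.1, hwitness.2.2.2.le⟩, ?_⟩,
    ⟨Y ^ 2, hwitness⟩⟩
  rintro μ ⟨ν, hν, hνμ, hfμν, hμν⟩
  have hline : √μ + (d - 1) * √ν = √(d * f) := by
    rw [hfμν, ← mul_assoc, mul_one_div_cancel (by linarith), one_mul,
      Real.sqrt_sq (by positivity)]
  simpa only [hline] using le_lineEllipseX_sq hn.le (hν.trans hνμ) hν hμν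
end

section
/- Let d ≥ 2. For 1/d ≤ f ≤ 1 and real parameters r, s ∈ [0,1], define t = (1-s)/(1-s+(1-r)(d²-1)) (with t = 0 when s = 1 and r < 1), and define G(s,r) = s·f + r·(1-f) + ((1-s+(1-r)(d²-1))/d)·E(t), where E(t) = 1 if t ≤ 1/d and E(t) = 1 - t + (-1 + 2(t + √((d-1)(1-t)t)))/d if t > 1/d. Then the maximum of G(s,r)/d² over (s,r) ∈ [0,1]² equals 1/d + f/d² - 1/d³, attained at s = 1, r = 0. -/
lemma pbtq_aux_E (D u v : ℝ) (hD : 2 ≤ D) (hu : 0 ≤ u) (hv : 0 ≤ v) :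
    (u + v) / D * (if u / (u + v) ≤ 1 / D then (1:ℝ)
      else 1 - u / (u + v) + (-1 + 2 * (u / (u + v) +
        Real.sqrt ((D - 1) * (1 - u / (u + v)) * (u / (u + v))))) / D)
    ≤ (u + v) / D := by
  have hD0 : (0:ℝ) < D := by linarith
  by_cases ht : u / (u + v) ≤ 1 / D
  · rw [if_pos ht, mul_one]
  · rw [if_neg ht]
    have hA0 : 0 < u + v := by
      rcases lt_or_eq_of_le (by linarith : (0:ℝ) ≤ u + v) with h | h
      · exact h
      · exfalso; apply ht; rw [← h, div_zero]; positivity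
    have hDuv : 0 ≤ (D - 1) * u * v :=
      mul_nonneg (mul_nonneg (by linarith) hu) hv
    set W : ℝ := Real.sqrt ((D - 1) * u * v) with hW
    have hW0 : 0 ≤ W := Real.sqrt_nonneg _
    have hDu : 0 ≤ (D - 1) * u := mul_nonneg (by linarith) hu
    have hWb : 2 * W ≤ (D - 1) * u + v := by
      have h1 : (D - 1) * u * v ≤ (((D - 1) * u + v) / 2) ^ 2 := by
        nlinarith [sq_nonneg ((D - 1) * u - v)]
      have h2 : W ≤ ((D - 1) * u + v) / 2 := by
        calc W ≤ Real.sqrt ((((D - 1) * u + v) / 2) ^ 2) := Real.sqrt_le_sqrt h1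
        _ = ((D - 1) * u + v) / 2 := Real.sqrt_sq (by linarith)
      linarith
    have hsq : Real.sqrt ((D - 1) * (1 - u / (u + v)) * (u / (u + v))) = W / (u + v) := by
      have e1 : (D - 1) * (1 - u / (u + v)) * (u / (u + v))
          = ((D - 1) * u * v) / (u + v) ^ 2 := by
        field_simp
        ring
      rw [e1, Real.sqrt_div hDuv, Real.sqrt_sq hA0.le, hW]
    rw [hsq]
    have e2 : (u + v) / D * (1 - u / (u + v) + (-1 + 2 * (u / (u + v) + W / (u + v))) / D)
        = v / D + (u - v + 2 * W) / D ^ 2 := by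
      field_simp
      ring
    rw [e2]
    have e3 : (u + v) / D - (v / D + (u - v + 2 * W) / D ^ 2)
        = ((D - 1) * u + v - 2 * W) / D ^ 2 := by
      field_simp
      ring
    have h4 : 0 ≤ ((D - 1) * u + v - 2 * W) / D ^ 2 :=
      div_nonneg (by linarith) (by positivity)
    linarith [e3, h4]

lemma pbtq_aux_core (D f s r : ℝ) (hD : 2 ≤ D) (hfD : 1 ≤ f * D) (hf2 : f ≤ 1)
    (hs0 : 0 ≤ s) (hs1 : s ≤ 1) (hr0 : 0 ≤ r) (hr1 : r ≤ 1) :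
    s * f + r * (1 - f) + (1 - s + (1 - r) * (D ^ 2 - 1)) / D ≤ D + f - 1 / D := by
  have hD0 : (0:ℝ) < D := by linarith
  have h1 : 0 ≤ (1 - s) * (f * D - 1) := mul_nonneg (by linarith) (by linarith)
  have h2 : 0 ≤ r * ((D ^ 2 - 1) - D * (1 - f)) := mul_nonneg hr0 (by nlinarith)
  have hgoal : (s * f + r * (1 - f) + (1 - s + (1 - r) * (D ^ 2 - 1)) / D) * D
      ≤ (D + f - 1 / D) * D := by
    have e1 : (s * f + r * (1 - f) + (1 - s + (1 - r) * (D ^ 2 - 1)) / D) * D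
        = s * f * D + r * (1 - f) * D + (1 - s + (1 - r) * (D ^ 2 - 1)) := by
      field_simp
    have e2 : (D + f - 1 / D) * D = D ^ 2 + f * D - 1 := by
      field_simp
    rw [e1, e2]
    nlinarith
  exact le_of_mul_le_mul_right hgoal hD0

theorem pbtq_isotropic_optimization (d : ℕ) (hd : 2 ≤ d) (f : ℝ)
    (hf1 : 1 / (d : ℝ) ≤ f) (hf2 : f ≤ 1) :
    let E : ℝ → ℝ := fun t => if t ≤ 1 / (d : ℝ) then 1
      else 1 - t + (-1 + 2 * (t + Real.sqrt (((d : ℝ) - 1) * (1 - t) * t))) / (d : ℝ)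
    let G : ℝ → ℝ → ℝ := fun s r =>
      s * f + r * (1 - f) + ((1 - s + (1 - r) * ((d : ℝ) ^ 2 - 1)) / (d : ℝ)) *
        E ((1 - s) / (1 - s + (1 - r) * ((d : ℝ) ^ 2 - 1)))
    IsGreatest {v : ℝ | ∃ s r : ℝ, 0 ≤ s ∧ s ≤ 1 ∧ 0 ≤ r ∧ r ≤ 1 ∧ v = G s r / (d : ℝ) ^ 2}
      (1 / (d : ℝ) + f / (d : ℝ) ^ 2 - 1 / (d : ℝ) ^ 3) ∧
    G 1 0 / (d : ℝ) ^ 2 = 1 / (d : ℝ) + f / (d : ℝ) ^ 2 - 1 / (d : ℝ) ^ 3 := by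
  intro E G
  have hD2 : (2:ℝ) ≤ (d:ℝ) := by exact_mod_cast hd
  have hD0 : (0:ℝ) < (d:ℝ) := by linarith
  have hQ : (0:ℝ) < (d:ℝ) ^ 2 - 1 := by nlinarith
  have hfD : 1 ≤ f * (d:ℝ) := by
    rw [div_le_iff₀ hD0] at hf1; linarith
  -- value at (1,0)
  have hT : G 1 0 / (d:ℝ) ^ 2 = 1 / (d:ℝ) + f / (d:ℝ) ^ 2 - 1 / (d:ℝ) ^ 3 := by
    have h0 : (1 - (1:ℝ)) / (1 - 1 + (1 - 0) * ((d:ℝ) ^ 2 - 1)) = 0 := by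
      norm_num
    simp only [G, E, h0]
    rw [if_pos (by positivity)]
    field_simp
    ring
  refine ⟨⟨⟨1, 0, by norm_num, by norm_num, by norm_num, by norm_num, hT.symm⟩, ?_⟩, hT⟩
  rintro x ⟨s, r, hs0, hs1, hr0, hr1, rfl⟩
  have h1 := pbtq_aux_E (d:ℝ) (1 - s) ((1 - r) * ((d:ℝ) ^ 2 - 1)) hD2
    (by linarith) (by nlinarith)
  have h2 := pbtq_aux_core (d:ℝ) f s r hD2 hfD hf2 hs0 hs1 hr0 hr1
  have hG : G s r ≤ (d:ℝ) + f - 1 / (d:ℝ) := by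
    simp only [G, E]
    linarith
  have e4 : ((d:ℝ) + f - 1 / (d:ℝ)) / (d:ℝ) ^ 2
      = 1 / (d:ℝ) + f / (d:ℝ) ^ 2 - 1 / (d:ℝ) ^ 3 := by
    field_simp
  calc G s r / (d:ℝ) ^ 2 ≤ ((d:ℝ) + f - 1 / (d:ℝ)) / (d:ℝ) ^ 2 := by gcongr
    _ = 1 / (d:ℝ) + f / (d:ℝ) ^ 2 - 1 / (d:ℝ) ^ 3 := e4
end

section
/- For d ≥ 2 and 1/d < f ≤ 1, the inequality 1/d + (1-df)²/(d²(d²f-1)) < 1/d + f/d² - 1/d³ holds; i.e., the classical-processing PBT fidelity of the isotropic state ρ_{d,f} is strictly smaller than its quantum-preparation PBT fidelity. -/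
theorem pbtcl_lt_pbtq_isotropic (d : ℕ) (hd : 2 ≤ d) (f : ℝ)
    (hf1 : 1 / (d : ℝ) < f) (hf2 : f ≤ 1) :
    1 / (d : ℝ) + (1 - (d : ℝ) * f) ^ 2 / ((d : ℝ) ^ 2 * ((d : ℝ) ^ 2 * f - 1))
      < 1 / (d : ℝ) + f / (d : ℝ) ^ 2 - 1 / (d : ℝ) ^ 3 := by
  have hD : (2:ℝ) ≤ (d:ℝ) := by exact_mod_cast hd
  have hD0 : (0:ℝ) < (d:ℝ) := by linarith
  have h1 : 1 < (d:ℝ) * f := by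
    rw [div_lt_iff₀ hD0] at hf1; linarith
  have h2 : (0:ℝ) < (d:ℝ) ^ 2 * f - 1 := by nlinarith
  have h3 : (0:ℝ) < (d:ℝ) ^ 2 * ((d:ℝ) ^ 2 * f - 1) := by positivity
  have key : (1 - (d : ℝ) * f) ^ 2 / ((d : ℝ) ^ 2 * ((d : ℝ) ^ 2 * f - 1))
      < ((d:ℝ) * f - 1) / (d:ℝ) ^ 3 := by
    rw [div_lt_div_iff₀ h3 (by positivity)]
    nlinarith [sq_nonneg ((d:ℝ)*f - 1), mul_pos (sub_pos.mpr h1) (sub_pos.mpr (show (1:ℝ) < d by linarith))]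
  have : f / (d:ℝ) ^ 2 - 1 / (d:ℝ) ^ 3 = ((d:ℝ) * f - 1) / (d:ℝ) ^ 3 := by
    field_simp
  linarith [key, this.ge, this.le]
end

section
/- The maximum of a₁ + Re(b₁) + a₂ over all triples of 2×2 positive semidefinite complex matrices N₁, N₂, N₃ with N₁ + N₂ + N₃ = I, where N₁ has diagonal entries a₁, a₁ and off-diagonal entry b₁, N₂ has diagonal entries a₂, c₂, and N₃ has diagonal entries c₂, a₂ (i.e., subject to the symmetry reductions a₁ = c₁, a₂ = c₃, a₃ = c₂), equals 4/3. Consequently F_{PBT_cl}(Φ⁺) = (1/4)(4/3 + 1) = 7/12. -/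
/-! The upper bound is weak duality for the semidefinite program: `Y = !![2/3, 1/3; 1/3, 2/3]`
dominates each cost matrix `Xᵢ ∈ {P, Q, R}` with a rank-one gap `(1/6) v vᴴ`,
`v = (1, -1), (1, 2), (2, 1)`, so every POVM has `∑ Tr[Xᵢ Nᵢ] ≤ ∑ Tr[Y Nᵢ] = Tr Y = 4/3`, and under
the symmetry constraints the objective is `∑ Tr[Xᵢ Nᵢ]`. The bound is attained by the rank-one
POVM `uᵢ uᵢᴴ` with `uᵢ` orthogonal to the `i`-th gap: `(2, 2)/3`, `(2, -1)/3`, `(-1, 2)/3`. -/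

open scoped ComplexOrder

namespace Matrix

variable {𝕜 n : Type*} [RCLike 𝕜] [Fintype n]

open scoped MatrixOrder in
theorem PosSemidef.trace_mul_nonneg {A B : Matrix n n 𝕜} (hA : A.PosSemidef)
    (hB : B.PosSemidef) : 0 ≤ (A * B).trace := by
  classical
  obtain ⟨X, rfl⟩ := CStarAlgebra.nonneg_iff_eq_star_mul_self.mp hA.nonneg
  rw [mul_assoc, trace_mul_comm]
  exact (hB.mul_mul_conjTranspose_same X).trace_nonneg

theorem sum_trace_mul_le_trace_of_posSemidef_sub {ι : Type*} [Fintype ι] [DecidableEq n]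
    {N X : ι → Matrix n n 𝕜} {Y : Matrix n n 𝕜} (hN : ∀ i, (N i).PosSemidef)
    (hsum : ∑ i, N i = 1) (hXY : ∀ i, (Y - X i).PosSemidef) :
    ∑ i, (X i * N i).trace ≤ Y.trace := by
  have gap : Y.trace - ∑ i, (X i * N i).trace = ∑ i, ((Y - X i) * N i).trace := by
    simp only [sub_mul, trace_sub, Finset.sum_sub_distrib, ← trace_sum, ← Finset.mul_sum, hsum,
      mul_one]
  exact sub_nonneg.mp (gap ▸ Finset.sum_nonneg fun i _ ↦ (hXY i).trace_mul_nonneg (hN i))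

end Matrix

open Matrix

noncomputable section

namespace PBTClassical

def costMatrix : Fin 3 → Matrix (Fin 2) (Fin 2) ℂ :=
  ![!![1/2, 1/2; 1/2, 1/2], !![1/2, 0; 0, 0], !![0, 0; 0, 1/2]]

def dualMatrix : Matrix (Fin 2) (Fin 2) ℂ := !![2/3, 1/3; 1/3, 2/3]

def gapVector : Fin 3 → Fin 2 → ℂ := ![![1, -1], ![1, 2], ![2, 1]]

def optimalVector : Fin 3 → Fin 2 → ℂ := ![![2/3, 2/3], ![2/3, -1/3], ![-1/3, 2/3]]

def optimalPOVM (i : Fin 3) : Matrix (Fin 2) (Fin 2) ℂ :=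
  vecMulVec (optimalVector i) (star (optimalVector i))

theorem posSemidef_optimalPOVM (i : Fin 3) : (optimalPOVM i).PosSemidef :=
  posSemidef_vecMulVec_self_star _

theorem dualMatrix_sub_costMatrix (i : Fin 3) :
    dualMatrix - costMatrix i = (6⁻¹ : ℝ) • vecMulVec (gapVector i) (star (gapVector i)) := by
  ext j k
  fin_cases i <;> fin_cases j <;> fin_cases k <;>
    simp [dualMatrix, costMatrix, gapVector, vecMulVec, map_ofNat] <;> norm_num

theorem posSemidef_dualMatrix_sub_costMatrix (i : Fin 3) :
    (dualMatrix - costMatrix i).PosSemidef := by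
  rw [dualMatrix_sub_costMatrix]
  exact (posSemidef_vecMulVec_self_star _).smul (by norm_num)

theorem re_trace_dualMatrix : dualMatrix.trace.re = 4 / 3 := by
  norm_num [dualMatrix, trace]

theorem sum_optimalPOVM : ∑ i, optimalPOVM i = 1 := by
  ext j k
  fin_cases j <;> fin_cases k <;>
    simp [Fin.sum_univ_three, optimalPOVM, optimalVector, vecMulVec, one_apply, map_ofNat] <;>
    norm_num

theorem re_objective_eq_re_sum_trace {N1 N2 N3 : Matrix (Fin 2) (Fin 2) ℂ}
    (h1 : N1.IsHermitian) (e1 : N1 0 0 = N1 1 1) (e2 : N2 0 0 = N3 1 1) :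
    (N1 0 0).re + (N1 0 1).re + (N2 0 0).re =
      (∑ i, (costMatrix i * ![N1, N2, N3] i).trace).re := by
  have b1 : (N1 1 0).re = (N1 0 1).re := by
    simpa using congrArg Complex.re (h1.apply 0 1)
  simp only [Fin.sum_univ_three, costMatrix, trace, diag, mul_apply, Fin.sum_univ_two]
  simp only [cons_val_zero, cons_val_one, cons_val_two, of_apply, Complex.add_re,
    Complex.mul_re, e1, e2, b1]
  norm_num
  ring

end PBTClassical

end

open PBTClassical in
theorem epr_pbtcl_povm_optimization :
    IsGreatest {v : ℝ | ∃ N1 N2 N3 : Matrix (Fin 2) (Fin 2) ℂ,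
        N1.PosSemidef ∧ N2.PosSemidef ∧ N3.PosSemidef ∧ N1 + N2 + N3 = 1 ∧
        N1 0 0 = N1 1 1 ∧ N2 0 0 = N3 1 1 ∧ N3 0 0 = N2 1 1 ∧
        v = (N1 0 0).re + (N1 0 1).re + (N2 0 0).re} (4 / 3) ∧
    (1 / 4 : ℝ) * (4 / 3 + 1) = 7 / 12 := by
  refine ⟨⟨⟨optimalPOVM 0, optimalPOVM 1, optimalPOVM 2, posSemidef_optimalPOVM 0,
    posSemidef_optimalPOVM 1, posSemidef_optimalPOVM 2, ?_, ?_⟩, ?_⟩, by norm_num⟩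
  · simpa [Fin.sum_univ_three] using sum_optimalPOVM
  · refine ⟨?_, ?_, ?_, ?_⟩ <;>
      norm_num [optimalPOVM, optimalVector, vecMulVec, map_ofNat, cons_val_two]
  rintro v ⟨N1, N2, N3, h1, h2, h3, hsum, e1, e2, -, rfl⟩
  have hN : ∀ i, (![N1, N2, N3] i).PosSemidef := by
    intro i; fin_cases i <;> assumption
  have hsum' : ∑ i, ![N1, N2, N3] i = 1 := by simpa [Fin.sum_univ_three] using hsum
  rw [re_objective_eq_re_sum_trace h1.isHermitian e1 e2, ← re_trace_dualMatrix]
  exact Complex.re_le_re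
    (sum_trace_mul_le_trace_of_posSemidef_sub hN hsum' posSemidef_dualMatrix_sub_costMatrix)
end
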